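/- arXiv:1210.8359 — 2 statements merged into one kernel-verified Lean document; each statement's English description precedes it below -/
import Mathlib

section
/- If Z belongs to the nullity distribution N_R of the Cartan h-curvature R, then R(X,Y)Z = 𝒞(F𝔎(X,Y), Z) for all X, Y. -/
/-- If `Z ∈ N_R` (nullity of the Cartan h-curvature), then
`R(X,Y)Z = 𝒞(F𝔎(X,Y), Z)` for all `X, Y`. Context: first Bianchi identity,
`R(X,Y)S = 𝔎(X,Y)` (so `N_R ⊆ N_𝔎`), antisymmetries, and
`𝒞(F𝔎(U,V),W) = 0` when `𝔎(U,V) = 0`. -/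
theorem stmt_10 {W : Type*} [AddCommGroup W]
    (h : W → W) (F : W → W) (R : W → W → W → W) (K : W → W → W)
    (C : W → W → W) (S : W)
    (hRS : ∀ X Y, R X Y S = K X Y)
    (hRanti : ∀ X Y Z, R X Y Z = -(R Y X Z))
    (hKanti : ∀ X Y, K X Y = -(K Y X))
    (hCF0 : ∀ Z, C (F 0) Z = 0)
    (hBianchi : ∀ X Y Z, R X Y Z + R Y Z X + R Z X Y =
      C (F (K X Y)) Z + C (F (K Y Z)) X + C (F (K Z X)) Y)
    (Z : W) (hZ : h Z = Z ∧ ∀ Y W', R Z Y W' = 0) :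
    ∀ X Y, R X Y Z = C (F (K X Y)) Z := by
  obtain ⟨-, hnull⟩ := hZ
  intro X Y
  have hKZ : ∀ Y, K Z Y = 0 := fun Y => (hRS Z Y).symm.trans (hnull Y S)
  have hKZ' : ∀ Y, K Y Z = 0 := fun Y => by rw [hKanti, hKZ, neg_zero]
  have hB := hBianchi X Y Z
  rw [hKZ, hKZ', hCF0, hCF0, hRanti Y Z X, hnull, hnull] at hB
  simpa using hB
end

section
/- Let (M,E) be a Landsberg space (𝒞′ = 0, equivalently P = 0). If for every X ∈ N_𝔎 and every Z one has D̊_{JZ}X ∈ N_𝔎, then N_𝔎 ⊆ N_R, and hence N_𝔎 = N_R. -/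
/-!
In a Landsberg space the Cartan h-curvature differs from the Berwald one by a term in `𝔎(X,Y)`,
so on `N_𝔎` it reduces to `R(X,Y)Z = -𝔎(D̊_{JZ}X, Y)`. Stability of `N_𝔎` under `D̊_{JZ}` makes
this vanish, giving `N_𝔎 ⊆ N_R`; the converse inclusion is `R(X,Y)S = 𝔎(X,Y)`.
-/

section Landsberg

variable {W : Type*} [AddCommGroup W] {J F : W → W} {R Rb : W → W → W → W} {K : W → W → W}
  {C : W → W → W} {Db : W → W → W}

theorem cartan_hCurvature_eq_of_mem_nullity
    (hLand : ∀ X Y Z, R X Y Z = Rb X Y Z + C (F (K X Y)) Z)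
    (hRb : ∀ X Y Z, Rb X Y Z =
      Db (J Z) (K X Y) - K (Db (J Z) X) Y - K X (Db (J Z) Y))
    (hDb0 : ∀ U, Db U 0 = 0) (hCF0 : ∀ Z, C (F 0) Z = 0)
    {X : W} (hX : ∀ Y, K X Y = 0) (Y Z : W) :
    R X Y Z = -K (Db (J Z) X) Y := by
  rw [hLand, hRb, hX, hCF0, hDb0, hX]
  abel

theorem barthel_eq_zero_of_cartan_hCurvature_eq_zero {S X : W}
    (hRS : ∀ X Y, R X Y S = K X Y) (hR : ∀ Y Z, R X Y Z = 0) (Y : W) :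
    K X Y = 0 := by
  rw [← hRS, hR]

end Landsberg

theorem stmt_12_general {W : Type*} [AddCommGroup W]
    (h : W → W) (J F : W → W) (R Rb : W → W → W → W) (K : W → W → W)
    (C : W → W → W) (Db : W → W → W) (S : W)
    (hRS : ∀ X Y, R X Y S = K X Y)
    (hLand : ∀ X Y Z, R X Y Z = Rb X Y Z + C (F (K X Y)) Z)
    (hRb : ∀ X Y Z, Rb X Y Z =
      Db (J Z) (K X Y) - K (Db (J Z) X) Y - K X (Db (J Z) Y))
    (hDb0 : ∀ U, Db U 0 = 0)
    (hCF0 : ∀ Z, C (F 0) Z = 0)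
    (hstab : ∀ X Z, (h X = X ∧ ∀ Y, K X Y = 0) →
      (h (Db (J Z) X) = Db (J Z) X ∧ ∀ Y, K (Db (J Z) X) Y = 0)) :
    ∀ X, (h X = X ∧ ∀ Y, K X Y = 0) ↔ (h X = X ∧ ∀ Y Z, R X Y Z = 0) := by
  intro X
  constructor
  · intro hXK
    refine ⟨hXK.1, fun Y Z => ?_⟩
    rw [cartan_hCurvature_eq_of_mem_nullity hLand hRb hDb0 hCF0 hXK.2, (hstab X Z hXK).2 Y, neg_zero]
  · rintro ⟨hX, hR⟩
    exact ⟨hX, barthel_eq_zero_of_cartan_hCurvature_eq_zero hRS hR⟩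

/-- Landsberg space (`𝒞' = 0`, `P = 0`): if `N_𝔎` is stable under all
`D̊_{JZ}`, then `N_𝔎 ⊆ N_R`, hence `N_𝔎 = N_R`. Context:
`R(X,Y)Z = R̊(X,Y)Z + 𝒞(F𝔎(X,Y),Z)`, `R̊(X,Y)Z = (D̊_{JZ}𝔎)(X,Y)`,
and `R(X,Y)S = 𝔎(X,Y)` giving `N_R ⊆ N_𝔎`. -/
theorem stmt_12 {W : Type*} [AddCommGroup W]
    (h : W → W) (J F : W → W) (R Rb : W → W → W → W) (K : W → W → W)
    (C : W → W → W) (Db : W → W → W) (S : W)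
    (hRS : ∀ X Y, R X Y S = K X Y)
    (hLand : ∀ X Y Z, R X Y Z = Rb X Y Z + C (F (K X Y)) Z)
    (hRb : ∀ X Y Z, Rb X Y Z =
      Db (J Z) (K X Y) - K (Db (J Z) X) Y - K X (Db (J Z) Y))
    (hDb0 : ∀ U, Db U 0 = 0)
    (hCF0 : ∀ Z, C (F 0) Z = 0)
    (hKanti : ∀ X Y, K X Y = -(K Y X))
    (hstab : ∀ X Z, (h X = X ∧ ∀ Y, K X Y = 0) →
      (h (Db (J Z) X) = Db (J Z) X ∧ ∀ Y, K (Db (J Z) X) Y = 0)) :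
    ∀ X, (h X = X ∧ ∀ Y, K X Y = 0) ↔ (h X = X ∧ ∀ Y Z, R X Y Z = 0) :=
  stmt_12_general h J F R Rb K C Db S hRS hLand hRb hDb0 hCF0 hstab
end
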